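/- Suppose a > 1, θ = 1 - 1/a, and y : [0,∞) → [0,∞), g : [0,∞) → [0,∞) satisfy y'(t) + (θ/2) g(t) + [θ - (24/(θ a^{3/2})) y(t)] g(t) ≤ 0, with θ - (24/(θ a^{3/2})) y(0) > 0 and y continuous. Then y'(t) + (θ/2) g(t) ≤ 0 for all t ≥ 0. -/
import Mathlib


open Set

/-- Abstract form of the passage from (3.17) to (3.19): the smallness of the
initial data makes the bracketed coefficient remain positive, yielding the
clean dissipative inequality. -/
theorem bracket_stays_positive (a : ℝ) (ha : 1 < a) (θ : ℝ) (hθ : θ = 1 - 1 / a)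
    (y g : ℝ → ℝ) (hy : ContinuousOn y (Ici 0))
    (hy0 : ∀ t ∈ Ici (0:ℝ), 0 ≤ y t) (hg0 : ∀ t ∈ Ici (0:ℝ), 0 ≤ g t)
    (hdiff : ∀ t ∈ Ici (0:ℝ), DifferentiableAt ℝ y t)
    (hineq : ∀ t ∈ Ici (0:ℝ),
      deriv y t + (θ / 2) * g t + (θ - (24 / (θ * a ^ ((3:ℝ)/2))) * y t) * g t ≤ 0)
    (hsmall : 0 < θ - (24 / (θ * a ^ ((3:ℝ)/2))) * y 0) :
    ∀ t ∈ Ici (0:ℝ), deriv y t + (θ / 2) * g t ≤ 0 := by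
  set c : ℝ := 24 / (θ * a ^ ((3:ℝ)/2)) with hc
  have hθpos : 0 < θ := by
    rw [hθ]
    have h1 : 1 / a < 1 := by
      rw [div_lt_one (by linarith)]; linarith
    linarith
  have hapow : 0 < a ^ ((3:ℝ)/2) := Real.rpow_pos_of_pos (by linarith) _
  have hcpos : 0 < c := by
    apply div_pos (by norm_num) (mul_pos hθpos hapow)
  -- Main claim: the bracket stays positive
  have key : ∀ t ∈ Ici (0:ℝ), 0 < θ - c * y t := by
    by_contra h
    push_neg at h
    obtain ⟨t₀, ht₀, hBt₀⟩ := h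
    set S : Set ℝ := {t | 0 ≤ t ∧ θ - c * y t ≤ 0} with hS
    have hSne : S.Nonempty := ⟨t₀, ht₀, hBt₀⟩
    have hSbdd : BddBelow S := ⟨0, fun x hx => hx.1⟩
    have hSclosed : IsClosed S := by
      have : S = Ici (0:ℝ) ∩ (fun t => θ - c * y t) ⁻¹' Iic 0 := by
        ext x; simp [hS, and_comm]
      rw [this]
      exact ContinuousOn.preimage_isClosed_of_isClosed
        (continuousOn_const.sub (continuousOn_const.mul hy)) isClosed_Ici isClosed_Iic
    set T := sInf S with hT
    have hTS : T ∈ S := hSclosed.csInf_mem hSne hSbdd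
    obtain ⟨hT0, hBT⟩ := hTS
    have hTpos : 0 < T := by
      rcases lt_or_eq_of_le hT0 with h | h
      · exact h
      · exfalso; rw [← h] at hBT; linarith
    -- y is antitone on [0, T]
    have hanti : AntitoneOn y (Icc 0 T) := by
      apply antitoneOn_of_deriv_nonpos (convex_Icc 0 T)
        (hy.mono (Icc_subset_Ici_self))
      · intro x hx
        rw [interior_Icc] at hx
        exact (hdiff x (le_of_lt hx.1)).differentiableWithinAt
      · intro x hx
        rw [interior_Icc] at hx
        have hx0 : (0:ℝ) ≤ x := le_of_lt hx.1
        have hnotS : x ∉ S := notMem_of_lt_csInf hx.2 hSbdd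
        have hBx : 0 < θ - c * y x := by
          by_contra hb
          exact hnotS ⟨hx0, le_of_not_gt hb⟩
        have h1 := hineq x hx0
        have h2 : 0 ≤ (θ / 2) * g x := mul_nonneg (by linarith) (hg0 x hx0)
        have h3 : 0 ≤ (θ - c * y x) * g x := mul_nonneg (le_of_lt hBx) (hg0 x hx0)
        linarith
    have hyT : y T ≤ y 0 := hanti ⟨le_refl 0, hT0⟩ ⟨hT0, le_refl T⟩ hT0
    have : c * y T ≤ c * y 0 := mul_le_mul_of_nonneg_left hyT (le_of_lt hcpos)
    linarith
  intro t ht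
  have h1 := hineq t ht
  have h2 : 0 ≤ (θ - c * y t) * g t :=
    mul_nonneg (le_of_lt (key t ht)) (hg0 t ht)
  linarith
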